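/- The sum over k >= 1 of p_k^{(2)} equals 1, where p_k^{(2)} = 2^{-k} * integral from 0 to infinity of [x^{-3/2} (1 - e^{-x}) Gamma(-1/2,x)^{k-1}] / [x^{-1/2} e^{-x} + gamma(1/2,x)]^k dx. -/

import Mathlib

open Set MeasureTheory

/-- Upper incomplete gamma function. -/
noncomputable def Gup (ν x : ℝ) : ℝ := ∫ t in Ioi x, Real.exp (-t) * t ^ (ν - 1)

/-- Lower incomplete gamma function. -/
noncomputable def glow (ν x : ℝ) : ℝ := ∫ t in Ioc (0 : ℝ) x, Real.exp (-t) * t ^ (ν - 1)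

noncomputable def p2 (k : ℕ) : ℝ :=
  (1 / 2 ^ k) * ∫ x in Ioi (0 : ℝ),
    (x ^ (-(3 / 2) : ℝ) * (1 - Real.exp (-x)) * Gup (-(1 / 2)) x ^ (k - 1)) /
      (x ^ (-(1 / 2) : ℝ) * Real.exp (-x) + glow (1 / 2) x) ^ k

/-!
Integration by parts gives the recurrence `Γ(s + 1, x) = s Γ(s, x) + x ^ s e^{-x}`; at `s = -1/2`,
together with `γ(1/2, x) + Γ(1/2, x) = √π`, it reads `Γ(-1/2, x) = 2 D(x) - 2√π`, where
`D(x) = x^{-1/2} e^{-x} + γ(1/2, x)` is the denominator. Hence the integrand of `p_{k+1}` is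
`h(x) / (2 D) · r^k` with `h(x) = x^{-3/2} (1 - e^{-x})` and `r = Γ(-1/2, x) / (2 D) ∈ [0, 1)`.
The geometric series sums to `h(x) / (2√π)`, and exchanging sum and integral (all terms are
nonnegative) leaves `∫₀^∞ h / (2√π) = -Γ(-1/2) / (2√π) = 1`.
-/

open Real Filter Topology

lemma measurable_setIntegral_prodMk_preimage {α β : Type*} [MeasurableSpace α]
    [MeasurableSpace β] {ν : Measure β} [SFinite ν] {f : β → ℝ} (hf : Measurable f)
    {S : Set (α × β)} (hS : MeasurableSet S) :
    Measurable fun x => ∫ y in Prod.mk x ⁻¹' S, f y ∂ν := by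
  have : StronglyMeasurable fun p : α × β => S.indicator (fun q => f q.2) p :=
    ((hf.comp measurable_snd).indicator hS).stronglyMeasurable
  convert (this.integral_prod_right' (ν := ν)).measurable using 2 with x
  rw [← integral_indicator (measurable_prodMk_left hS)]
  rfl

lemma hasSum_integral_of_nonneg {α ι : Type*} [MeasurableSpace α] {μ : Measure α}
    [Countable ι] {F : ι → α → ℝ} {f : α → ℝ} (hF_meas : ∀ n, AEStronglyMeasurable (F n) μ)
    (hF_nonneg : ∀ n, 0 ≤ᵐ[μ] F n) (hf : Integrable f μ)
    (h_lim : ∀ᵐ a ∂μ, HasSum (fun n => F n a) (f a)) :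
    HasSum (fun n => ∫ a, F n a ∂μ) (∫ a, f a ∂μ) :=
  hasSum_integral_of_dominated_convergence F hF_meas
    (fun n => (hF_nonneg n).mono fun _ ha => (Real.norm_of_nonneg ha).le)
    (h_lim.mono fun _ ha => ha.summable) (hf.congr (h_lim.mono fun _ ha => ha.tsum_eq.symm))
    h_lim

lemma hasSum_div_mul_geometric {a b c : ℝ} (hb : 0 ≤ b) (hbc : b < c) :
    HasSum (fun k : ℕ => a / c * (b / c) ^ k) (a / (c - b)) := by
  have hc : 0 < c := hb.trans_lt hbc
  have := (hasSum_geometric_of_lt_one (div_nonneg hb hc.le)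
    ((div_lt_one hc).2 hbc)).mul_left (a / c)
  rwa [show a / c * (1 - b / c)⁻¹ = a / (c - b) by
    field_simp [(sub_pos.2 hbc).ne']] at this

section IncompleteGamma

variable {s x : ℝ}

lemma integrableOn_Ioi_Gamma_integrand (s : ℝ) (hx : 0 < x) :
    IntegrableOn (fun t => exp (-t) * t ^ s) (Ioi x) :=
  integrable_of_isBigO_exp_neg one_half_pos
    (fun t ht => (continuous_exp.comp continuous_neg).continuousAt.mul
      (continuousAt_rpow_const t s (Or.inl (hx.trans_le ht).ne')) |>.continuousWithinAt)
    (Gamma_integrand_isLittleO s).isBigO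

lemma Gup_nonneg (hx : 0 ≤ x) : 0 ≤ Gup s x :=
  setIntegral_nonneg measurableSet_Ioi fun t ht => by
    have : 0 < t := hx.trans_lt ht
    positivity

@[simp] lemma glow_zero : glow s 0 = 0 := by simp [glow]

lemma glow_eq_intervalIntegral (hx : 0 ≤ x) :
    glow s x = ∫ t in 0..x, exp (-t) * t ^ (s - 1) := by
  rw [glow, intervalIntegral.integral_of_le hx]

lemma glow_add_Gup (hs : 0 < s) (hx : 0 ≤ x) : glow s x + Gup s x = Gamma s := by
  rw [glow, Gup, ← setIntegral_union (Ioc_disjoint_Ioi le_rfl) measurableSet_Ioi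
    ((GammaIntegral_convergent hs).mono_set Ioc_subset_Ioi_self)
    ((GammaIntegral_convergent hs).mono_set (Ioi_subset_Ioi hx)),
    Ioc_union_Ioi_eq_Ioi hx, Gamma_eq_integral hs]

lemma Gup_add_one (hx : 0 < x) : Gup (s + 1) x = s * Gup s x + x ^ s * exp (-x) := by
  have hderiv : ∀ t ∈ Ici x, HasDerivAt (fun t => -(t ^ s * exp (-t)))
      (exp (-t) * t ^ s - s * (exp (-t) * t ^ (s - 1))) t := fun t ht => by
    have hpow : HasDerivAt (fun t => t ^ s) (s * t ^ (s - 1)) t :=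
      hasDerivAt_rpow_const (Or.inl (hx.trans_le ht).ne')
    exact (hpow.mul (hasDerivAt_neg t).exp).neg.congr_deriv (by ring)
  have hint₁ := integrableOn_Ioi_Gamma_integrand s hx
  have hint₂ := (integrableOn_Ioi_Gamma_integrand (s - 1) hx).const_mul s
  have hlim : Tendsto (fun t => -(t ^ s * exp (-t))) atTop (𝓝 0) := by
    simpa using (tendsto_rpow_mul_exp_neg_mul_atTop_nhds_zero s 1 one_pos).neg
  have hftc := integral_Ioi_of_hasDerivAt_of_tendsto' hderiv (hint₁.sub hint₂) hlim
  rw [integral_sub hint₁ hint₂, integral_const_mul] at hftc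
  rw [Gup, Gup, add_sub_cancel_right]
  linarith

lemma hasDerivAt_glow (hs : 0 < s) (hx : 0 < x) :
    HasDerivAt (glow s) (exp (-x) * x ^ (s - 1)) x := by
  have hmeas : Measurable fun t : ℝ => exp (-t) * t ^ (s - 1) := by fun_prop
  have hint : IntervalIntegrable (fun t => exp (-t) * t ^ (s - 1)) volume 0 x :=
    (intervalIntegrable_iff_integrableOn_Ioc_of_le hx.le).2 <|
      (GammaIntegral_convergent hs).mono_set Ioc_subset_Ioi_self
  refine (intervalIntegral.integral_hasDerivAt_right hint
    hmeas.stronglyMeasurable.stronglyMeasurableAtFilter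
    ((continuous_exp.comp continuous_neg).continuousAt.mul
      (continuousAt_rpow_const x _ (Or.inl hx.ne')))).congr_of_eventuallyEq ?_
  filter_upwards [Ioi_mem_nhds hx] with y hy using glow_eq_intervalIntegral hy.le

lemma continuousWithinAt_glow_zero (hs : 0 < s) : ContinuousWithinAt (glow s) (Ici 0) 0 := by
  have hint : IntegrableOn (fun t => exp (-t) * t ^ (s - 1)) (uIcc 0 1) := by
    rw [uIcc_of_le zero_le_one, integrableOn_Icc_iff_integrableOn_Ioc]
    exact (GammaIntegral_convergent hs).mono_set Ioc_subset_Ioi_self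
  have hcont := intervalIntegral.continuousOn_primitive_interval hint 0 (by simp)
  rw [uIcc_of_le zero_le_one] at hcont
  refine (hcont.mono_of_mem_nhdsWithin (Icc_mem_nhdsGE one_pos)).congr_of_eventuallyEq ?_ (by simp)
  filter_upwards [self_mem_nhdsWithin] with y hy using glow_eq_intervalIntegral hy

lemma tendsto_glow_atTop (hs : 0 < s) : Tendsto (glow s) atTop (𝓝 (Gamma s)) := by
  rw [Gamma_eq_integral hs]
  refine (intervalIntegral_tendsto_integral_Ioi 0 (GammaIntegral_convergent hs)
    tendsto_id).congr' ?_
  filter_upwards [eventually_ge_atTop 0] with y hy using (glow_eq_intervalIntegral hy).symm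

lemma measurable_glow (s : ℝ) : Measurable (glow s) :=
  measurable_setIntegral_prodMk_preimage (by fun_prop)
    ((measurableSet_lt measurable_const measurable_snd).inter
      (measurableSet_le measurable_snd measurable_fst))

lemma measurable_Gup (s : ℝ) : Measurable (Gup s) :=
  measurable_setIntegral_prodMk_preimage (by fun_prop)
    (measurableSet_lt measurable_fst measurable_snd)

end IncompleteGamma

section RpowOneSubExp

variable {s : ℝ}

lemma tendsto_rpow_mul_one_sub_exp_neg_nhdsGT_zero (hs : -1 < s) :
    Tendsto (fun x => x ^ s * (1 - exp (-x))) (𝓝[>] 0) (𝓝 0) := by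
  have hlim : Tendsto (fun x : ℝ => x ^ (s + 1)) (𝓝[>] 0) (𝓝 0) := by
    have := (continuousAt_rpow_const 0 (s + 1) (Or.inr (by linarith))).tendsto
    rw [zero_rpow (by linarith)] at this
    exact this.mono_left nhdsWithin_le_nhds
  refine tendsto_of_tendsto_of_tendsto_of_le_of_le' tendsto_const_nhds hlim ?_ ?_ <;>
    filter_upwards [self_mem_nhdsWithin] with x (hx : 0 < x)
  · have : exp (-x) ≤ 1 := exp_le_one_iff.2 (by linarith)
    have := rpow_pos_of_pos hx s
    nlinarith
  · rw [rpow_add_one hx.ne']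
    have : 1 - exp (-x) ≤ x := by linarith [add_one_le_exp (-x)]
    exact mul_le_mul_of_nonneg_left this (rpow_nonneg hx.le s)

lemma tendsto_rpow_mul_one_sub_exp_neg_atTop (hs : s < 0) :
    Tendsto (fun x => x ^ s * (1 - exp (-x))) atTop (𝓝 0) := by
  have := (tendsto_rpow_neg_atTop (neg_pos.2 hs)).mul
    (tendsto_exp_neg_atTop_nhds_zero.const_sub 1)
  simpa using this

noncomputable def rpowOneSubExpPrimitive (s x : ℝ) : ℝ :=
  (x ^ s * (1 - exp (-x)) - glow (s + 1) x) / s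

lemma hasDerivAt_rpowOneSubExpPrimitive (hs₁ : -1 < s) (hs₀ : s ≠ 0) {x : ℝ} (hx : 0 < x) :
    HasDerivAt (rpowOneSubExpPrimitive s) (x ^ (s - 1) * (1 - exp (-x))) x := by
  have hpow : HasDerivAt (fun t => t ^ s) (s * x ^ (s - 1)) x :=
    hasDerivAt_rpow_const (Or.inl hx.ne')
  have hglow := hasDerivAt_glow (s := s + 1) (by linarith) hx
  rw [add_sub_cancel_right] at hglow
  refine ((hpow.mul ((hasDerivAt_neg x).exp.const_sub 1)).sub hglow).div_const s
    |>.congr_deriv ?_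
  field_simp
  ring

lemma continuousWithinAt_rpowOneSubExpPrimitive_zero (hs₁ : -1 < s) :
    ContinuousWithinAt (rpowOneSubExpPrimitive s) (Ici 0) 0 := by
  have hpow : ContinuousWithinAt (fun x => x ^ s * (1 - exp (-x))) (Ici 0) 0 := by
    rw [← continuousWithinAt_Ioi_iff_Ici, ContinuousWithinAt]
    simpa using tendsto_rpow_mul_one_sub_exp_neg_nhdsGT_zero hs₁
  exact (hpow.sub (continuousWithinAt_glow_zero (by linarith))).div_const s

lemma tendsto_rpowOneSubExpPrimitive_atTop (hs₁ : -1 < s) (hs₀ : s < 0) :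
    Tendsto (rpowOneSubExpPrimitive s) atTop (𝓝 (-Gamma s)) := by
  have := ((tendsto_rpow_mul_one_sub_exp_neg_atTop hs₀).sub
    (tendsto_glow_atTop (s := s + 1) (by linarith))).div_const s
  rwa [Gamma_add_one hs₀.ne, zero_sub, neg_div, mul_div_cancel_left₀ _ hs₀.ne] at this

lemma rpow_mul_one_sub_exp_neg_nonneg {x : ℝ} (hx : 0 < x) :
    0 ≤ x ^ s * (1 - exp (-x)) :=
  mul_nonneg (rpow_nonneg hx.le _) (sub_nonneg.2 (exp_le_one_iff.2 (by linarith)))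

lemma integrableOn_rpow_mul_one_sub_exp_neg (hs₁ : -1 < s) (hs₀ : s < 0) :
    IntegrableOn (fun x => x ^ (s - 1) * (1 - exp (-x))) (Ioi 0) :=
  integrableOn_Ioi_deriv_of_nonneg (continuousWithinAt_rpowOneSubExpPrimitive_zero hs₁)
    (fun _ hx => hasDerivAt_rpowOneSubExpPrimitive hs₁ hs₀.ne hx)
    (fun _ hx => rpow_mul_one_sub_exp_neg_nonneg hx)
    (tendsto_rpowOneSubExpPrimitive_atTop hs₁ hs₀)

lemma integral_rpow_mul_one_sub_exp_neg (hs₁ : -1 < s) (hs₀ : s < 0) :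
    ∫ x in Ioi 0, x ^ (s - 1) * (1 - exp (-x)) = -Gamma s := by
  rw [integral_Ioi_of_hasDerivAt_of_nonneg
    (continuousWithinAt_rpowOneSubExpPrimitive_zero hs₁)
    (fun _ hx => hasDerivAt_rpowOneSubExpPrimitive hs₁ hs₀.ne hx)
    (fun _ hx => rpow_mul_one_sub_exp_neg_nonneg hx)
    (tendsto_rpowOneSubExpPrimitive_atTop hs₁ hs₀)]
  simp [rpowOneSubExpPrimitive]

end RpowOneSubExp

lemma Gamma_neg_one_half : Gamma (-(1 / 2)) = -2 * √π := by
  have := Gamma_add_one (s := -(1 / 2)) (by norm_num)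
  rw [show -(1 / 2) + 1 = (1 / 2 : ℝ) by norm_num, Gamma_one_half_eq] at this
  linarith

lemma integrableOn_rpow_neg_three_halves_mul_one_sub_exp_neg :
    IntegrableOn (fun x => x ^ (-(3 / 2) : ℝ) * (1 - exp (-x))) (Ioi 0) := by
  rw [show (-(3 / 2) : ℝ) = -(1 / 2) - 1 by norm_num]
  exact integrableOn_rpow_mul_one_sub_exp_neg (by norm_num) (by norm_num)

lemma integral_rpow_neg_three_halves_mul_one_sub_exp_neg :
    ∫ x in Ioi 0, x ^ (-(3 / 2) : ℝ) * (1 - exp (-x)) = 2 * √π := by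
  rw [show (-(3 / 2) : ℝ) = -(1 / 2) - 1 by norm_num,
    integral_rpow_mul_one_sub_exp_neg (by norm_num) (by norm_num), Gamma_neg_one_half]
  ring

noncomputable def gammaDenom (x : ℝ) : ℝ := x ^ (-(1 / 2) : ℝ) * exp (-x) + glow (1 / 2) x

lemma two_mul_gammaDenom_sub_Gup {x : ℝ} (hx : 0 < x) :
    2 * gammaDenom x - Gup (-(1 / 2)) x = 2 * √π := by
  have hrec := Gup_add_one (s := -(1 / 2)) hx
  have hsplit := glow_add_Gup one_half_pos hx.le
  rw [show -(1 / 2) + 1 = (1 / 2 : ℝ) by norm_num] at hrec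
  rw [Gamma_one_half_eq] at hsplit
  rw [gammaDenom]
  linarith

lemma Gup_neg_one_half_lt {x : ℝ} (hx : 0 < x) : Gup (-(1 / 2)) x < 2 * gammaDenom x := by
  linarith [two_mul_gammaDenom_sub_Gup hx, sqrt_pos.2 pi_pos]

noncomputable def p2Integrand (k : ℕ) (x : ℝ) : ℝ :=
  x ^ (-(3 / 2) : ℝ) * (1 - exp (-x)) / (2 * gammaDenom x) *
    (Gup (-(1 / 2)) x / (2 * gammaDenom x)) ^ k

lemma p2_succ (k : ℕ) : p2 (k + 1) = ∫ x in Ioi 0, p2Integrand k x := by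
  rw [p2, ← integral_const_mul]
  congr 1 with x
  rw [p2Integrand, gammaDenom, Nat.add_sub_cancel, div_pow, mul_pow, pow_succ, pow_succ]
  field_simp

lemma measurable_p2Integrand (k : ℕ) : Measurable (p2Integrand k) := by
  have := measurable_glow (1 / 2)
  have := measurable_Gup (-(1 / 2))
  unfold p2Integrand gammaDenom
  fun_prop

lemma p2Integrand_nonneg (k : ℕ) {x : ℝ} (hx : 0 < x) : 0 ≤ p2Integrand k x := by
  have hG := Gup_nonneg (s := -(1 / 2)) hx.le
  have hD : 0 ≤ 2 * gammaDenom x := by linarith [Gup_neg_one_half_lt hx]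
  exact mul_nonneg (div_nonneg (rpow_mul_one_sub_exp_neg_nonneg hx) hD)
    (pow_nonneg (div_nonneg hG hD) k)

lemma hasSum_p2Integrand {x : ℝ} (hx : 0 < x) :
    HasSum (fun k => p2Integrand k x) (x ^ (-(3 / 2) : ℝ) * (1 - exp (-x)) / (2 * √π)) := by
  rw [← two_mul_gammaDenom_sub_Gup hx]
  exact hasSum_div_mul_geometric (Gup_nonneg hx.le) (Gup_neg_one_half_lt hx)

theorem sum_p2 : ∑' k : ℕ, p2 (k + 1) = 1 := by
  have hsum := hasSum_integral_of_nonneg (μ := volume.restrict (Ioi 0))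
    (fun k => (measurable_p2Integrand k).aestronglyMeasurable)
    (fun k => ae_restrict_of_forall_mem measurableSet_Ioi fun _ hx => p2Integrand_nonneg k hx)
    (integrableOn_rpow_neg_three_halves_mul_one_sub_exp_neg.div_const _)
    (ae_restrict_of_forall_mem measurableSet_Ioi fun _ hx => hasSum_p2Integrand hx)
  rw [tsum_congr p2_succ, hsum.tsum_eq, integral_div,
    integral_rpow_neg_three_halves_mul_one_sub_exp_neg, div_self (by positivity)]
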